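/- The pathetic tiny ⧾∞ = {0 | {0 | ∞̄}} is the smallest positive affine game: if G is an affine game with G > 0, then G ≥ ⧾∞. Dually, the pathetic miny ⧿∞ = {{∞ | 0} | 0} is the largest negative affine game. -/
import Mathlib


inductive AGame : Type
  | inf : AGame
  | binf : AGame
  | node : List AGame → List AGame → AGame

namespace AGame

/-- The affine games: option sets are nonempty (hereditarily). -/
inductive Valid : AGame → Prop
  | inf : Valid .inf
  | binf : Valid .binf
  | node : ∀ {L R : List AGame}, L ≠ [] → R ≠ [] →
      (∀ g ∈ L, Valid g) → (∀ g ∈ R, Valid g) → Valid (.node L R)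

/-- Total version of the disjunctive sum (value on the undefined cases `∞ + ∞̄` is junk). -/
def add' : AGame → AGame → AGame
  | .inf, _ => .inf
  | _, .inf => .inf
  | .binf, _ => .binf
  | _, .binf => .binf
  | .node L R, .node L' R' =>
      .node ((L.attach.map fun x => add' x.1 (.node L' R')) ++
             (L'.attach.map fun y => add' (.node L R) y.1))
            ((R.attach.map fun x => add' x.1 (.node L' R')) ++
             (R'.attach.map fun y => add' (.node L R) y.1))
termination_by G H => sizeOf G + sizeOf H
decreasing_by
  all_goals
    simp_wf
    first
      | (have := List.sizeOf_lt_of_mem x.2; simp_all; omega)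
      | (have := List.sizeOf_lt_of_mem y.2; simp_all; omega)

/-- The disjunctive sum, undefined (`none`) exactly when adding `∞` to `∞̄`. -/
def add : AGame → AGame → Option AGame
  | .inf, .binf => none
  | .binf, .inf => none
  | G, H => some (add' G H)

mutual
/-- `o^L(G) = L` : Left, playing first, wins `G`. -/
def lf : AGame → Bool
  | .inf => true
  | .binf => false
  | .node L _ => L.attach.any fun x => ls x.1
termination_by G => sizeOf G
decreasing_by
  simp_wf; have := List.sizeOf_lt_of_mem x.2; simp_all; omega
/-- `o^R(G) = L` : Left, playing second, wins `G`. -/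
def ls : AGame → Bool
  | .inf => true
  | .binf => false
  | .node _ R => R.attach.all fun x => lf x.1
termination_by G => sizeOf G
decreasing_by
  simp_wf; have := List.sizeOf_lt_of_mem x.2; simp_all; omega
end

/-- The combined outcome `(o^L(G), o^R(G))`, encoded as a pair of booleans
(`true` = Left wins). `(true,true)` is 𝓛, `(true,false)` is 𝓝, `(false,true)` is 𝓟,
`(false,false)` is 𝓡. -/
def outcome (G : AGame) : Bool × Bool := (lf G, ls G)

/-- The partial order of outcomes (componentwise, 𝓛 maximal, 𝓡 minimal, 𝓝 ∥ 𝓟). -/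
def OutLE (a b : Bool × Bool) : Prop :=
  (a.1 = true → b.1 = true) ∧ (a.2 = true → b.2 = true)

/-- `G ≥ H` : replacing `H` by `G` never hurts Left in any disjunctive sum. -/
def GE (G H : AGame) : Prop :=
  ∀ X : AGame, Valid X → X ≠ .inf → X ≠ .binf →
    OutLE (outcome (add' H X)) (outcome (add' G X))

/-- Game equivalence. -/
def Equiv (G H : AGame) : Prop :=
  ∀ X : AGame, Valid X → X ≠ .inf → X ≠ .binf →
    outcome (add' G X) = outcome (add' H X)

/-- The zero game `{∞̄ | ∞}`. -/
def zero : AGame := .node [.binf] [.inf]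

/-- The conjugate (players switch roles). -/
def neg : AGame → AGame
  | .inf => .binf
  | .binf => .inf
  | .node L R =>
      .node (R.attach.map fun x => neg x.1) (L.attach.map fun x => neg x.1)
termination_by G => sizeOf G
decreasing_by
  all_goals
    simp_wf
    (have := List.sizeOf_lt_of_mem x.2; simp_all; omega)


/-- Left option set (empty list for the terminating games). -/
def leftOptions : AGame → List AGame
  | .node L _ => L
  | _ => []

/-- Right option set (empty list for the terminating games). -/
def rightOptions : AGame → List AGame
  | .node _ R => R
  | _ => []

/-- A check: a game having `∞` as a Left option or `∞̄` as a Right option. -/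
def IsCheck : AGame → Prop
  | .node L R => .inf ∈ L ∨ .binf ∈ R
  | _ => False

/-- `Follower H G` : `H` is a follower of `G` (i.e. `G` itself, an option of `G`,
an option of an option, and so on). -/
inductive Follower : AGame → AGame → Prop
  | refl (G : AGame) : Follower G G
  | left {H K : AGame} {L R : List AGame} : K ∈ L → Follower H K → Follower H (.node L R)
  | right {H K : AGame} {L R : List AGame} : K ∈ R → Follower H K → Follower H (.node L R)

/-- A Conway form: distinct from `∞` and `∞̄`, with no checks among its followers. -/
def ConwayForm (G : AGame) : Prop :=
  G ≠ .inf ∧ G ≠ .binf ∧ ∀ H, Follower H G → ¬ IsCheck H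

/-- A Conway game: a game equivalent to some Conway form. -/
def ConwayGame (G : AGame) : Prop :=
  ∃ G', Valid G' ∧ ConwayForm G' ∧ Equiv G G'

/-- `J` is invertible: `J + K = 0` (in the sense of game equivalence) for some affine `K`. -/
def Invertible (J : AGame) : Prop :=
  ∃ K, Valid K ∧ ∃ S, add J K = some S ∧ Equiv S zero

/-- Number forms: the images of the surreal-number Conway forms under the embedding
that replaces an empty option set by `{∞̄}` on the Left and by `{∞}` on the Right.
Every genuine Left option is strictly less than every genuine Right option, and
all genuine options are again number forms. -/
inductive NumForm : AGame → Prop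
  | mk {L R : List AGame}
      (hL0 : L ≠ []) (hR0 : R ≠ [])
      (hLb : .binf ∈ L → L = [.binf]) (hRi : .inf ∈ R → R = [.inf])
      (hLnum : ∀ x ∈ L, x ≠ .binf → NumForm x)
      (hRnum : ∀ y ∈ R, y ≠ .inf → NumForm y)
      (hlt : ∀ x ∈ L, ∀ y ∈ R, x ≠ .binf → y ≠ .inf → GE y x ∧ ¬ GE x y) :
      NumForm (.node L R)

/-- A number: an affine game equal to (the image of) a Conway number form. -/
def IsNumber (G : AGame) : Prop := ∃ n, Valid n ∧ NumForm n ∧ Equiv G n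

/-- The pathetic tiny `⧾∞ = {0 | {0 | ∞̄}}`. -/
def tinyInf : AGame := .node [zero] [.node [zero] [.binf]]

/-- The pathetic miny `⧿∞ = {{∞ | 0} | 0}`. -/
def minyInf : AGame := .node [.node [.inf] [zero]] [zero]

end AGame

namespace AGame
lemma add'_inf_left (X : AGame) : add' .inf X = .inf := by rw [add']
lemma add'_node_inf (L R) : add' (.node L R) .inf = .inf := by rw [add'] <;> simp
lemma add'_node_binf (L R) : add' (.node L R) .binf = .binf := by rw [add'] <;> simp
lemma add'_binf_node (L R) : add' .binf (.node L R) = .binf := by rw [add'] <;> simp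
lemma add'_node_node (L R L' R') : add' (.node L R) (.node L' R') =
      .node ((L.attach.map fun x => add' x.1 (.node L' R')) ++
             (L'.attach.map fun y => add' (.node L R) y.1))
            ((R.attach.map fun x => add' x.1 (.node L' R')) ++
             (R'.attach.map fun y => add' (.node L R) y.1)) := by rw [add'] <;> simp
lemma lf_node_iff (L R) : lf (.node L R) = true ↔ ∃ x ∈ L, ls x = true := by
  rw [lf]; simp [List.any_eq_true]
lemma ls_node_iff (L R) : ls (.node L R) = true ↔ ∀ x ∈ R, lf x = true := by
  rw [ls]; simp [List.all_eq_true]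
lemma lf_add_node {L R L' R'} : lf (add' (.node L R) (.node L' R')) = true ↔
    (∃ g ∈ L, ls (add' g (.node L' R')) = true) ∨
    (∃ x ∈ L', ls (add' (.node L R) x) = true) := by
  rw [add'_node_node, lf_node_iff]
  constructor
  · rintro ⟨a, ha, hls⟩
    rcases List.mem_append.1 ha with h | h
    · obtain ⟨⟨g, hg⟩, -, rfl⟩ := List.mem_map.1 h
      exact Or.inl ⟨g, hg, hls⟩
    · obtain ⟨⟨x, hx⟩, -, rfl⟩ := List.mem_map.1 h
      exact Or.inr ⟨x, hx, hls⟩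
  · rintro (⟨g, hg, hls⟩ | ⟨x, hx, hls⟩)
    · exact ⟨_, List.mem_append.2 (Or.inl (List.mem_map.2 ⟨⟨g, hg⟩, List.mem_attach _ _, rfl⟩)), hls⟩
    · exact ⟨_, List.mem_append.2 (Or.inr (List.mem_map.2 ⟨⟨x, hx⟩, List.mem_attach _ _, rfl⟩)), hls⟩

lemma ls_add_node {L R L' R'} : ls (add' (.node L R) (.node L' R')) = true ↔
    (∀ g ∈ R, lf (add' g (.node L' R')) = true) ∧
    (∀ x ∈ R', lf (add' (.node L R) x) = true) := by
  rw [add'_node_node, ls_node_iff]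
  constructor
  · intro h
    refine ⟨fun g hg => ?_, fun x hx => ?_⟩
    · exact h _ (List.mem_append.2 (Or.inl (List.mem_map.2 ⟨⟨g, hg⟩, List.mem_attach _ _, rfl⟩)))
    · exact h _ (List.mem_append.2 (Or.inr (List.mem_map.2 ⟨⟨x, hx⟩, List.mem_attach _ _, rfl⟩)))
  · rintro ⟨h1, h2⟩ a ha
    rcases List.mem_append.1 ha with h | h
    · obtain ⟨⟨g, hg⟩, -, rfl⟩ := List.mem_map.1 h; exact h1 g hg
    · obtain ⟨⟨x, hx⟩, -, rfl⟩ := List.mem_map.1 h; exact h2 x hx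
@[simp] lemma lf_inf : lf .inf = true := by rw [lf]
@[simp] lemma ls_inf : ls .inf = true := by rw [ls]
@[simp] lemma lf_binf : lf .binf = false := by rw [lf]
@[simp] lemma ls_binf : ls .binf = false := by rw [ls]

lemma lf_node_false_iff (L R) : lf (.node L R) = false ↔ ∀ x ∈ L, ls x = false := by
  rw [← Bool.not_eq_true, lf_node_iff]; push_neg
  simp only [Bool.not_eq_true]

lemma ls_node_false_iff (L R) : ls (.node L R) = false ↔ ∃ x ∈ R, lf x = false := by
  rw [← Bool.not_eq_true, ls_node_iff]; push_neg
  simp only [Bool.not_eq_true]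

lemma lf_add_node_false {L R L' R'} : lf (add' (.node L R) (.node L' R')) = false ↔
    (∀ g ∈ L, ls (add' g (.node L' R')) = false) ∧
    (∀ x ∈ L', ls (add' (.node L R) x) = false) := by
  rw [← Bool.not_eq_true, lf_add_node]; push_neg
  simp only [Bool.not_eq_true]

lemma ls_add_node_false {L R L' R'} : ls (add' (.node L R) (.node L' R')) = false ↔
    (∃ g ∈ R, lf (add' g (.node L' R')) = false) ∨
    (∃ x ∈ R', lf (add' (.node L R) x) = false) := by
  rw [← Bool.not_eq_true, ls_add_node, not_and_or]; push_neg
  simp only [Bool.not_eq_true]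
lemma sum3 : ∀ n (G X : AGame), sizeOf G + sizeOf X ≤ n →
    (ls G = true → ls X = true → ls (add' G X) = true) ∧
    (lf G = true → ls X = true → lf (add' G X) = true) ∧
    (ls G = true → lf X = true → lf (add' G X) = true) := by
  intro n
  induction n with
  | zero => intro G X h; exfalso; cases G <;> simp_all <;> omega
  | succ n ih =>
    intro G X h
    cases G with
    | inf => simp [add'_inf_left]
    | binf => simp
    | node Lg Rg =>
      cases X with
      | inf => simp [add'_node_inf]
      | binf => simp
      | node Lx Rx =>
        simp only [AGame.node.sizeOf_spec] at h
        refine ⟨?_, ?_, ?_⟩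
        · intro hG hX
          rw [ls_node_iff] at hG hX
          rw [ls_add_node]
          constructor
          · intro g hg
            have hs : sizeOf g + sizeOf (AGame.node Lx Rx) ≤ n := by
              have := List.sizeOf_lt_of_mem hg; simp; omega
            exact (ih g _ hs).2.1 (hG g hg) (by rw [ls_node_iff]; exact hX)
          · intro x hx
            have hs : sizeOf (AGame.node Lg Rg) + sizeOf x ≤ n := by
              have := List.sizeOf_lt_of_mem hx; simp; omega
            exact (ih _ x hs).2.2 (by rw [ls_node_iff]; exact hG) (hX x hx)
        · intro hG hX
          rw [lf_node_iff] at hG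
          obtain ⟨g, hg, hgs⟩ := hG
          rw [lf_add_node]
          refine Or.inl ⟨g, hg, ?_⟩
          have hs : sizeOf g + sizeOf (AGame.node Lx Rx) ≤ n := by
            have := List.sizeOf_lt_of_mem hg; simp; omega
          exact (ih g _ hs).1 hgs hX
        · intro hG hX
          rw [lf_node_iff] at hX
          obtain ⟨x, hx, hxs⟩ := hX
          rw [lf_add_node]
          refine Or.inr ⟨x, hx, ?_⟩
          have hs : sizeOf (AGame.node Lg Rg) + sizeOf x ≤ n := by
            have := List.sizeOf_lt_of_mem hx; simp; omega
          exact (ih _ x hs).1 hG hxs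

lemma rsum3 : ∀ n (G X : AGame), sizeOf G + sizeOf X ≤ n →
    (lf G = false → lf X = false → lf (add' G X) = false) ∧
    (ls G = false → lf X = false → ls (add' G X) = false) ∧
    (lf G = false → ls X = false → ls (add' G X) = false) := by
  intro n
  induction n with
  | zero => intro G X h; exfalso; cases G <;> simp_all <;> omega
  | succ n ih =>
    intro G X h
    cases G with
    | inf => simp
    | binf =>
      cases X with
      | inf => simp
      | binf => simp [add']
      | node Lx Rx => simp [add'_binf_node]
    | node Lg Rg =>
      cases X with
      | inf => simp [add'_node_inf]
      | binf => simp [add'_node_binf]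
      | node Lx Rx =>
        simp only [AGame.node.sizeOf_spec] at h
        refine ⟨?_, ?_, ?_⟩
        · intro hG hX
          rw [lf_node_false_iff] at hG hX
          rw [lf_add_node_false]
          constructor
          · intro g hg
            have hs : sizeOf g + sizeOf (AGame.node Lx Rx) ≤ n := by
              have := List.sizeOf_lt_of_mem hg; simp; omega
            exact (ih g _ hs).2.1 (hG g hg) (by rw [lf_node_false_iff]; exact hX)
          · intro x hx
            have hs : sizeOf (AGame.node Lg Rg) + sizeOf x ≤ n := by
              have := List.sizeOf_lt_of_mem hx; simp; omega
            exact (ih _ x hs).2.2 (by rw [lf_node_false_iff]; exact hG) (hX x hx)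
        · intro hG hX
          rw [ls_node_false_iff] at hG
          obtain ⟨g, hg, hgs⟩ := hG
          rw [ls_add_node_false]
          refine Or.inl ⟨g, hg, ?_⟩
          have hs : sizeOf g + sizeOf (AGame.node Lx Rx) ≤ n := by
            have := List.sizeOf_lt_of_mem hg; simp; omega
          exact (ih g _ hs).1 hgs hX
        · intro hG hX
          rw [ls_node_false_iff] at hX
          obtain ⟨x, hx, hxs⟩ := hX
          rw [ls_add_node_false]
          refine Or.inr ⟨x, hx, ?_⟩
          have hs : sizeOf (AGame.node Lg Rg) + sizeOf x ≤ n := by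
            have := List.sizeOf_lt_of_mem hx; simp; omega
          exact (ih _ x hs).1 hG hxs
lemma zero_add_outcome : ∀ n (X : AGame), sizeOf X ≤ n →
    lf (add' zero X) = lf X ∧ ls (add' zero X) = ls X := by
  intro n
  induction n with
  | zero => intro X h; exfalso; cases X <;> simp_all <;> omega
  | succ n ih =>
    intro X h
    cases X with
    | inf => rw [zero, add'_node_inf]; exact ⟨rfl, rfl⟩
    | binf => rw [zero, add'_node_binf]; exact ⟨rfl, rfl⟩
    | node Lx Rx =>
      simp only [AGame.node.sizeOf_spec] at h
      constructor
      · rw [Bool.eq_iff_iff, zero, lf_add_node, lf_node_iff]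
        simp only [List.mem_singleton]
        constructor
        · rintro (⟨g, rfl, hgs⟩ | ⟨x, hx, hxs⟩)
          · rw [add'_binf_node] at hgs; simp at hgs
          · refine ⟨x, hx, ?_⟩
            have hs : sizeOf x ≤ n := by
              have := List.sizeOf_lt_of_mem hx; omega
            rw [← (ih x hs).2]; exact hxs
        · rintro ⟨x, hx, hxs⟩
          refine Or.inr ⟨x, hx, ?_⟩
          have hs : sizeOf x ≤ n := by
            have := List.sizeOf_lt_of_mem hx; omega
          exact (ih x hs).2.trans hxs
      · rw [Bool.eq_iff_iff, zero, ls_add_node, ls_node_iff]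
        simp only [List.mem_singleton]
        constructor
        · rintro ⟨-, h2⟩ x hx
          have hs : sizeOf x ≤ n := by
            have := List.sizeOf_lt_of_mem hx; omega
          rw [← (ih x hs).1]; exact h2 x hx
        · intro h2
          refine ⟨fun g hg => ?_, fun x hx => ?_⟩
          · subst hg; rw [add'_inf_left]; simp
          · have hs : sizeOf x ≤ n := by
              have := List.sizeOf_lt_of_mem hx; omega
            exact (ih x hs).1.trans (h2 x hx)

lemma add_zero_outcome : ∀ n (G : AGame), sizeOf G ≤ n →
    lf (add' G zero) = lf G ∧ ls (add' G zero) = ls G := by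
  intro n
  induction n with
  | zero => intro G h; exfalso; cases G <;> simp_all <;> omega
  | succ n ih =>
    intro G h
    cases G with
    | inf => rw [zero, add'_inf_left]; exact ⟨rfl, rfl⟩
    | binf => rw [zero, add'_binf_node]; exact ⟨rfl, rfl⟩
    | node Lg Rg =>
      simp only [AGame.node.sizeOf_spec] at h
      constructor
      · rw [Bool.eq_iff_iff, zero, lf_add_node, lf_node_iff]
        simp only [List.mem_singleton]
        constructor
        · rintro (⟨g, hg, hgs⟩ | ⟨x, rfl, hxs⟩)
          · refine ⟨g, hg, ?_⟩
            have hs : sizeOf g ≤ n := by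
              have := List.sizeOf_lt_of_mem hg; omega
            rw [← (ih g hs).2]; exact hgs
          · rw [add'_node_binf] at hxs; simp at hxs
        · rintro ⟨g, hg, hgs⟩
          refine Or.inl ⟨g, hg, ?_⟩
          have hs : sizeOf g ≤ n := by
            have := List.sizeOf_lt_of_mem hg; omega
          exact (ih g hs).2.trans hgs
      · rw [Bool.eq_iff_iff, zero, ls_add_node, ls_node_iff]
        simp only [List.mem_singleton]
        constructor
        · rintro ⟨h1, -⟩ g hg
          have hs : sizeOf g ≤ n := by
            have := List.sizeOf_lt_of_mem hg; omega
          rw [← (ih g hs).1]; exact h1 g hg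
        · intro h1
          refine ⟨fun g hg => ?_, fun x hx => ?_⟩
          · have hs : sizeOf g ≤ n := by
              have := List.sizeOf_lt_of_mem hg; omega
            exact (ih g hs).1.trans (h1 g hg)
          · subst hx; rw [add'_node_inf]; simp
lemma add'_binf_inf : add' .binf .inf = .inf := by rw [add'] <;> simp
lemma add'_binf_binf : add' .binf .binf = .binf := by rw [add'] <;> simp

@[simp] lemma lf_zero : lf zero = false := by
  rw [zero, lf_node_false_iff]; simp

@[simp] lemma ls_zero : ls zero = true := by
  rw [zero, ls_node_iff]; simp

lemma tiny_le (G : AGame) (hlf : lf G = true) (hls : ls G = true) :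
    ∀ n (X : AGame), sizeOf X ≤ n →
      (lf (add' tinyInf X) = true → lf (add' G X) = true) ∧
      (ls (add' tinyInf X) = true → ls (add' G X) = true) := by
  cases G with
  | inf => intro n X h; simp [add'_inf_left]
  | binf => simp at hls
  | node Lg Rg =>
    intro n
    induction n with
    | zero => intro X h; exfalso; cases X <;> simp_all <;> omega
    | succ n ih =>
      intro X h
      cases X with
      | inf => rw [tinyInf, add'_node_inf, add'_node_inf]; simp
      | binf => rw [tinyInf, add'_node_binf, add'_node_binf]; simp
      | node Lx Rx =>
        simp only [AGame.node.sizeOf_spec] at h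
        constructor
        · intro hTX
          rw [tinyInf, lf_add_node] at hTX
          rw [lf_add_node]
          rcases hTX with ⟨g, hg, hgs⟩ | ⟨x, hx, hxs⟩
          · simp only [List.mem_singleton] at hg; subst hg
            have hlX : ls (.node Lx Rx) = true :=
              (zero_add_outcome _ _ le_rfl).2 ▸ hgs
            have := (sum3 (sizeOf (AGame.node Lg Rg) + sizeOf (AGame.node Lx Rx))
              _ _ le_rfl).2.1 hlf hlX
            rw [lf_add_node] at this; exact this
          · have hs : sizeOf x ≤ n := by have := List.sizeOf_lt_of_mem hx; omega
            exact Or.inr ⟨x, hx, (ih x hs).2 (by rw [tinyInf]; exact hxs)⟩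
        · intro hTX
          rw [tinyInf, ls_add_node] at hTX
          obtain ⟨h1, h2⟩ := hTX
          rw [ls_add_node]
          constructor
          · -- for each right option g of G, lf (g + X)
            intro g hg
            have hlfg : lf g = true := (ls_node_iff Lg Rg).1 hls g hg
            have htr := h1 _ (List.mem_singleton.2 rfl)
            rw [lf_add_node] at htr
            rcases htr with ⟨z, hz, hzs⟩ | ⟨x, hx, hxs⟩
            · -- ls X holds
              simp only [List.mem_singleton] at hz; subst hz
              have hlX : ls (.node Lx Rx) = true :=
                (zero_add_outcome _ _ le_rfl).2 ▸ hzs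
              have := (sum3 (sizeOf g + sizeOf (AGame.node Lx Rx)) g _ le_rfl).2.1 hlfg hlX
              exact this
            · -- x must be ∞, a Left check in X
              have hxi : x = .inf := by
                cases x with
                | inf => rfl
                | binf => rw [add'_node_binf] at hxs; simp at hxs
                | node l r =>
                  rw [ls_add_node] at hxs
                  have := hxs.1 _ (List.mem_singleton.2 rfl)
                  rw [add'_binf_node] at this; simp at this
              subst hxi
              cases g with
              | inf => rw [add'_inf_left]; simp
              | binf => simp at hlfg
              | node lg rg =>
                rw [lf_add_node]
                exact Or.inr ⟨.inf, hx, by rw [add'_node_inf]; simp⟩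
          · intro x hx
            have hs : sizeOf x ≤ n := by have := List.sizeOf_lt_of_mem hx; omega
            exact (ih x hs).1 (by rw [tinyInf]; exact h2 x hx)

lemma miny_le (G : AGame) (hlf : lf G = false) (hls : ls G = false) :
    ∀ n (X : AGame), sizeOf X ≤ n →
      (lf (add' G X) = true → lf (add' minyInf X) = true) ∧
      (ls (add' G X) = true → ls (add' minyInf X) = true) := by
  cases G with
  | inf => simp at hlf
  | binf =>
    intro n X h
    cases X with
    | inf => rw [minyInf, add'_node_inf, add'_binf_inf]; simp
    | binf => rw [add'_binf_binf]; simp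
    | node Lx Rx => rw [add'_binf_node]; simp
  | node Lg Rg =>
    intro n
    induction n with
    | zero => intro X h; exfalso; cases X <;> simp_all <;> omega
    | succ n ih =>
      intro X h
      cases X with
      | inf => rw [minyInf, add'_node_inf, add'_node_inf]; simp
      | binf => rw [minyInf, add'_node_binf, add'_node_binf]; simp
      | node Lx Rx =>
        simp only [AGame.node.sizeOf_spec] at h
        constructor
        · intro hGX
          rw [lf_add_node] at hGX
          rw [minyInf, lf_add_node]
          rcases hGX with ⟨g, hg, hgs⟩ | ⟨x, hx, hxs⟩
          · -- Left's move in G; deduce lf X and no ∞̄-check for Right in X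
            have hlsg : ls g = false := (lf_node_false_iff Lg Rg).1 hlf g hg
            have hlX : lf (.node Lx Rx) = true := by
              by_contra hc
              have hc' : lf (.node Lx Rx) = false := by
                cases hb : lf (.node Lx Rx) <;> simp_all
              have := (rsum3 (sizeOf g + sizeOf (AGame.node Lx Rx)) g _ le_rfl).2.1
                hlsg hc'
              rw [this] at hgs; simp at hgs
            refine Or.inl ⟨_, List.mem_singleton.2 rfl, ?_⟩
            rw [ls_add_node]
            refine ⟨?_, ?_⟩
            · intro z hz
              simp only [List.mem_singleton] at hz; subst hz
              exact (zero_add_outcome _ _ le_rfl).1.trans hlX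
            · intro x hx
              cases x with
              | inf => rw [add'_node_inf]; simp
              | binf =>
                -- Right check ∞̄ in X: then ls (g + X) would be false
                exfalso
                cases g with
                | inf => simp at hlsg
                | binf => rw [add'_binf_node] at hgs; simp at hgs
                | node lg rg =>
                  rw [ls_add_node] at hgs
                  have := hgs.2 _ hx
                  rw [add'_node_binf] at this; simp at this
              | node l r =>
                rw [lf_add_node]
                exact Or.inl ⟨.inf, List.mem_singleton.2 rfl, by rw [add'_inf_left]; simp⟩
          · have hs : sizeOf x ≤ n := by have := List.sizeOf_lt_of_mem hx; omega
            exact Or.inr ⟨x, hx, by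
              have := (ih x hs).2 hxs
              rw [minyInf] at this; exact this⟩
        · intro hGX
          have hlX : lf (.node Lx Rx) = true := by
            by_contra hc
            have hc' : lf (.node Lx Rx) = false := by
              cases hb : lf (.node Lx Rx) <;> simp_all
            have := (rsum3 (sizeOf (AGame.node Lg Rg) + sizeOf (AGame.node Lx Rx))
              _ _ le_rfl).2.1 hls hc'
            rw [this] at hGX; simp at hGX
          rw [ls_add_node] at hGX
          obtain ⟨h1, h2⟩ := hGX
          rw [minyInf, ls_add_node]
          refine ⟨?_, ?_⟩
          · intro z hz
            simp only [List.mem_singleton] at hz; subst hz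
            exact (zero_add_outcome _ _ le_rfl).1.trans hlX
          · intro x hx
            have hs : sizeOf x ≤ n := by have := List.sizeOf_lt_of_mem hx; omega
            have := (ih x hs).1 (h2 x hx)
            rw [minyInf] at this; exact this
lemma valid_zero : Valid zero := by
  rw [zero]
  exact Valid.node (by simp) (by simp)
    (by intro g hg; simp at hg; subst hg; exact Valid.binf)
    (by intro g hg; simp at hg; subst hg; exact Valid.inf)

lemma zero_ne_inf : zero ≠ .inf := by rw [zero]; exact fun h => by simp at h
lemma zero_ne_binf : zero ≠ .binf := by rw [zero]; exact fun h => by simp at h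

/-- If `o(G) = 𝓟` (Left loses first, wins second) then `G` is equivalent to `0`. -/
lemma p_equiv_zero {G : AGame} (h1 : lf G = false) (h2 : ls G = true) :
    Equiv G zero := by
  intro X _ _ _
  have e1 : lf (add' G X) = lf X := by
    cases hl : lf X with
    | true => exact (sum3 (sizeOf G + sizeOf X) G X le_rfl).2.2 h2 hl
    | false => exact (rsum3 (sizeOf G + sizeOf X) G X le_rfl).1 h1 hl
  have e2 : ls (add' G X) = ls X := by
    cases hl : ls X with
    | true => exact (sum3 (sizeOf G + sizeOf X) G X le_rfl).1 h2 hl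
    | false => exact (rsum3 (sizeOf G + sizeOf X) G X le_rfl).2.2 h1 hl
  have z1 := (zero_add_outcome (sizeOf X) X le_rfl).1
  have z2 := (zero_add_outcome (sizeOf X) X le_rfl).2
  unfold outcome
  rw [e1, e2, z1, z2]


/-- The pathetic tiny is the smallest positive affine game, and dually the
pathetic miny is the largest negative affine game. -/
theorem tiny_smallest_positive :
    (∀ G, Valid G → GE G zero → ¬ Equiv G zero → GE G tinyInf) ∧
    (∀ G, Valid G → GE zero G → ¬ Equiv G zero → GE minyInf G) := by
  constructor
  · intro G _ hGE hNE
    have h0 := hGE zero valid_zero zero_ne_inf zero_ne_binf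
    have hlsG : ls G = true := by
      have := h0.2
      rw [show outcome (add' zero zero) = (lf zero, ls zero) from
            Prod.ext (zero_add_outcome _ _ le_rfl).1 (zero_add_outcome _ _ le_rfl).2,
          show outcome (add' G zero) = (lf G, ls G) from
            Prod.ext (add_zero_outcome _ _ le_rfl).1 (add_zero_outcome _ _ le_rfl).2] at this
      exact this (by simp)
    have hlfG : lf G = true := by
      by_contra hc
      have hlf : lf G = false := by cases hb : lf G <;> simp_all
      exact hNE (p_equiv_zero hlf hlsG)
    intro X _ _ _
    have h := tiny_le G hlfG hlsG (sizeOf X) X le_rfl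
    exact ⟨h.1, h.2⟩
  · intro G _ hGE hNE
    have h0 := hGE zero valid_zero zero_ne_inf zero_ne_binf
    have hlfG : lf G = false := by
      have := h0.1
      rw [show outcome (add' zero zero) = (lf zero, ls zero) from
            Prod.ext (zero_add_outcome _ _ le_rfl).1 (zero_add_outcome _ _ le_rfl).2,
          show outcome (add' G zero) = (lf G, ls G) from
            Prod.ext (add_zero_outcome _ _ le_rfl).1 (add_zero_outcome _ _ le_rfl).2] at this
      simp only [lf_zero] at this
      cases hb : lf G with
      | true => exact absurd (this hb) (by simp)
      | false => rfl
    have hlsG : ls G = false := by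
      by_contra hc
      have hls : ls G = true := by cases hb : ls G <;> simp_all
      exact hNE (p_equiv_zero hlfG hls)
    intro X _ _ _
    have h := miny_le G hlfG hlsG (sizeOf X) X le_rfl
    exact ⟨h.1, h.2⟩
end AGame
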